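/- For a finite dataset of N points with group assignment g and cluster assignment c such that every cluster is nonempty and K is nonempty, the minimum over clusters k of the per-cluster group entropy H_k is at most the global group entropy H. -/

import Mathlib

/-- Number of points in group `t`: `|g̃_t|` where `g̃_t = {i | g i = t}`. -/
def gcnt {N : ℕ} {T : Type*} [DecidableEq T] (g : Fin N → T) (t : T) : ℕ :=
  (Finset.univ.filter fun i => g i = t).card

/-- Number of points in cluster `k`: `|c̃_k|` where `c̃_k = {i | c i = k}`. -/
def ccnt {N : ℕ} {K : Type*} [DecidableEq K] (c : Fin N → K) (k : K) : ℕ :=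
  (Finset.univ.filter fun i => c i = k).card

/-- Number of points in group `t` and cluster `k`: `|g̃_t ∩ c̃_k|`. -/
def gccnt {N : ℕ} {T K : Type*} [DecidableEq T] [DecidableEq K]
    (g : Fin N → T) (c : Fin N → K) (t : T) (k : K) : ℕ :=
  (Finset.univ.filter fun i => g i = t ∧ c i = k).card

/-- Per-cluster group entropy
`H_k = -∑ t, (|g̃_t ∩ c̃_k|/|c̃_k|) log (|g̃_t ∩ c̃_k|/|c̃_k|)`
(natural log, `0 log 0 = 0`). -/
noncomputable def Hclu {N : ℕ} {T K : Type*} [Fintype T] [DecidableEq T] [DecidableEq K]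
    (g : Fin N → T) (c : Fin N → K) (k : K) : ℝ :=
  -∑ t : T, ((gccnt g c t k : ℝ) / (ccnt c k : ℝ)) *
      Real.log ((gccnt g c t k : ℝ) / (ccnt c k : ℝ))

/-- Global group entropy `H = -∑ t, (|g̃_t|/N) log (|g̃_t|/N)`
(natural log, `0 log 0 = 0`). -/
noncomputable def Hglob {N : ℕ} {T : Type*} [Fintype T] [DecidableEq T]
    (g : Fin N → T) : ℝ :=
  -∑ t : T, ((gcnt g t : ℝ) / (N : ℝ)) * Real.log ((gcnt g t : ℝ) / (N : ℝ))

/-!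
Weighting cluster `k` by its size `|c̃_k|`, the global group distribution `|g̃_t|/N` is the
weighted average of the per-cluster distributions `|g̃_t ∩ c̃_k|/|c̃_k|`. Entropy is concave, so
`H` dominates the weighted average of the `H_k`, which in turn dominates their minimum.
-/

open Finset Real

section Entropy

variable {ι τ : Type*} [Fintype τ]

lemma Finset.centerMass_sum_comm (s : Finset ι) (w : ι → ℝ) (z : ι → τ → ℝ) :
    s.centerMass w (fun i => ∑ t, z i t) = ∑ t, s.centerMass w (fun i => z i t) := by
  simp only [centerMass, smul_eq_mul, mul_sum]
  rw [sum_comm]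

lemma centerMass_sum_negMulLog_le {s : Finset ι} {w : ι → ℝ} (hw₀ : ∀ i ∈ s, 0 ≤ w i)
    (hw₁ : 0 < ∑ i ∈ s, w i) {p : ι → τ → ℝ} (hp : ∀ i ∈ s, ∀ t, 0 ≤ p i t) :
    s.centerMass w (fun i => ∑ t, negMulLog (p i t)) ≤
      ∑ t, negMulLog (s.centerMass w (fun i => p i t)) := by
  rw [s.centerMass_sum_comm]
  exact sum_le_sum fun t _ =>
    concaveOn_negMulLog.le_map_centerMass hw₀ hw₁ fun i hi => Set.mem_Ici.mpr (hp i hi t)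

end Entropy

section Counts

variable {N : ℕ} {T K : Type*} [DecidableEq T] [Fintype K] [DecidableEq K]

lemma sum_ccnt (c : Fin N → K) : ∑ k, ccnt c k = N := by
  simpa [ccnt] using (card_eq_sum_card_fiberwise (s := univ) (t := univ)
    fun i _ => mem_univ (c i)).symm

lemma sum_gccnt (g : Fin N → T) (c : Fin N → K) (t : T) : ∑ k, gccnt g c t k = gcnt g t := by
  rw [gcnt, card_eq_sum_card_fiberwise (t := univ) fun i _ => mem_univ (c i)]
  simp only [gccnt, filter_filter]

lemma centerMass_gccnt_div_ccnt (g : Fin N → T) (c : Fin N → K) (hc : ∀ k, 0 < ccnt c k)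
    (t : T) :
    univ.centerMass (fun k => (ccnt c k : ℝ)) (fun k => (gccnt g c t k : ℝ) / ccnt c k) =
      (gcnt g t : ℝ) / N := by
  have hsize (k : K) : (ccnt c k : ℝ) * ((gccnt g c t k : ℝ) / ccnt c k) = gccnt g c t k :=
    mul_div_cancel₀ _ (by exact_mod_cast (hc k).ne')
  simp only [centerMass, smul_eq_mul, hsize]
  rw [← Nat.cast_sum, ← Nat.cast_sum, sum_ccnt, sum_gccnt, inv_mul_eq_div]

end Counts

lemma Hclu_eq_sum_negMulLog {N : ℕ} {T K : Type*} [Fintype T] [DecidableEq T] [DecidableEq K]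
    (g : Fin N → T) (c : Fin N → K) (k : K) :
    Hclu g c k = ∑ t, negMulLog ((gccnt g c t k : ℝ) / ccnt c k) := by
  simp [Hclu, negMulLog_eq_neg]

lemma Hglob_eq_sum_negMulLog {N : ℕ} {T : Type*} [Fintype T] [DecidableEq T] (g : Fin N → T) :
    Hglob g = ∑ t, negMulLog ((gcnt g t : ℝ) / N) := by
  simp [Hglob, negMulLog_eq_neg]

theorem stmt9_general {N : ℕ} {T K : Type*} [Fintype T] [DecidableEq T] [Fintype K] [DecidableEq K]
    [Nonempty K]
    (g : Fin N → T) (c : Fin N → K)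
    (hc : ∀ k : K, 0 < ccnt c k) :
    Finset.univ.inf' Finset.univ_nonempty (fun k : K => Hclu g c k) ≤ Hglob g := by
  have hw₀ : ∀ k ∈ univ, (0 : ℝ) ≤ ccnt c k := fun k _ => Nat.cast_nonneg _
  have hw₁ : (0 : ℝ) < ∑ k, (ccnt c k : ℝ) :=
    sum_pos (fun k _ => Nat.cast_pos.mpr (hc k)) univ_nonempty
  calc univ.inf' univ_nonempty (fun k : K => Hclu g c k)
      ≤ univ.centerMass (fun k => (ccnt c k : ℝ)) (fun k => Hclu g c k) :=
        inf_le_centerMass hw₀ hw₁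
    _ ≤ ∑ t, negMulLog (univ.centerMass (fun k => (ccnt c k : ℝ))
          (fun k => (gccnt g c t k : ℝ) / ccnt c k)) := by
        simpa only [Hclu_eq_sum_negMulLog] using
          centerMass_sum_negMulLog_le hw₀ hw₁ fun k _ t => by positivity
    _ = Hglob g := by
        simp only [centerMass_gccnt_div_ccnt g c hc, Hglob_eq_sum_negMulLog]

/-- The minimum over clusters `k` of the per-cluster group entropy `H_k` is at most
the global group entropy `H`. -/
theorem stmt9 {N : ℕ} {T K : Type*} [Fintype T] [DecidableEq T] [Fintype K] [DecidableEq K]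
    [Nonempty K]
    (g : Fin N → T) (c : Fin N → K) (hN : 0 < N)
    (hc : ∀ k : K, 0 < ccnt c k) :
    Finset.univ.inf' Finset.univ_nonempty (fun k : K => Hclu g c k) ≤ Hglob g :=
  stmt9_general g c hc
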